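/- If a random adjacency matrix X on n vertices with m edges is obtained via the stub-pairing map from a ball exchangeable random urn configuration Ψ ∈ [n]^{[2m]}, then for every B ∈ A_n^m: P(X = B) = P((d(X,i))_{i=1}^n = (d(B,i))_{i=1}^n) · (∏_{i=1}^n d(B,i)!)/(2m)! · m! · 2^{m'(B)} / ((∏_{i<j} B(i,j)!) · (∏_{i=1}^n (B(i,i)/2)!)), where m'(B) = Σ_{i<j} B(i,j) is the number of non-loop edges. -/

import Mathlib

open Finset Nat

/-- The number of balls of color `i` in the urn configuration `ψ`. -/
def colorCount {M n : ℕ} (ψ : Fin M → Fin n) (i : Fin n) : ℕ :=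
  (Finset.univ.filter fun l => ψ l = i).card

/-- The adjacency matrix obtained from the urn configuration `ψ : [2m] → [n]` by the
stub-pairing map. -/
def stubAdj {m n : ℕ} (ψ : Fin (2 * m) → Fin n) (i j : Fin n) : ℕ :=
  ∑ e : Fin m,
    ((if ψ ⟨2 * (e : ℕ), by have := e.isLt; omega⟩ = i ∧
         ψ ⟨2 * (e : ℕ) + 1, by have := e.isLt; omega⟩ = j then 1 else 0) +
     (if ψ ⟨2 * (e : ℕ), by have := e.isLt; omega⟩ = j ∧
         ψ ⟨2 * (e : ℕ) + 1, by have := e.isLt; omega⟩ = i then 1 else 0))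

/-- The degree `d(B,i) = ∑_j B(i,j)`. -/
def degB {n : ℕ} (B : Fin n → Fin n → ℕ) (i : Fin n) : ℕ := ∑ j, B i j

/-- The number `m'(B) = ∑_{i<j} B(i,j)` of non-loop edges. -/
def nonloop {n : ℕ} (B : Fin n → Fin n → ℕ) : ℕ :=
  ∑ i : Fin n, ∑ j : Fin n, if i < j then B i j else 0

/-!
Exchangeability makes the weight of a configuration `ψ` depend only on its type (the
color counts): averaging over all `(2m)!` permutations of the balls, exactly `∏ d(B,i)!`
of them map `ψ` to any given configuration of the same type. Hence every configuration
realising `B` has weight `P(type = deg B) · ∏ d(B,i)! / (2m)!`, and it remains to count them.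
A configuration is a list of `m` ordered edges; it realises `B` iff the list of sorted
edges contains each pair `i < j` exactly `B(i,j)` times and each loop `B(i,i)/2` times.
There are `m! / (∏_{i<j} B(i,j)! ∏ (B(i,i)/2)!)` such sorted lists, and each lifts to
`2^{m'(B)}` ordered ones, one orientation bit per non-loop edge.
-/

section PermCount

variable {α β : Type*} [Fintype α] [DecidableEq β]

theorem exists_perm_comp_eq {f g : α → β}
    (h : ∀ b, #{x | g x = b} = #{x | f x = b}) : ∃ σ : Equiv.Perm α, f ∘ σ = g := by
  have e : ∀ b, {x // g x = b} ≃ {x // f x = b} := fun b =>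
    Fintype.equivOfCardEq (by simpa only [Fintype.card_subtype] using h b)
  refine ⟨(Equiv.sigmaFiberEquiv g).symm.trans
    ((Equiv.sigmaCongrRight e).trans (Equiv.sigmaFiberEquiv f)), funext fun x => ?_⟩
  exact (e (g x) ⟨x, rfl⟩).2

variable [DecidableEq α] [Fintype β]

theorem card_perm_comp_eq {f g : α → β}
    (h : ∀ b, #{x | g x = b} = #{x | f x = b}) :
    #{σ : Equiv.Perm α | f ∘ σ = g} = ∏ b, (#{x | f x = b})! := by
  obtain ⟨σ₀, rfl⟩ := exists_perm_comp_eq h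
  have hstab := DomMulAct.stabilizer_card f
  simp only [Fintype.card_subtype] at hstab
  rw [← hstab]
  refine card_equiv (Equiv.mulRight σ₀⁻¹) fun σ => ?_
  simp only [mem_filter, mem_univ, true_and, Equiv.coe_mulRight, Equiv.Perm.coe_mul]
  constructor
  · intro h; rw [← Function.comp_assoc, h, Function.comp_assoc]; simp
  · intro h; funext x; simpa using congrFun h (σ₀ x)

theorem card_fiber_eq_mul_prod_factorial {c : β → ℕ} (hc : ∑ b, c b = Fintype.card α) :
    #{u : α → β | ∀ b, #{x | u x = b} = c b} * ∏ b, (c b)! = (Fintype.card α)! := by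
  obtain ⟨u₀, hu₀⟩ : ∃ u₀ : α → β, ∀ b, #{x | u₀ x = b} = c b := by
    let e : α ≃ Σ b, Fin (c b) := Fintype.equivOfCardEq (by simp [hc])
    refine ⟨fun x => (e x).1, fun b => ?_⟩
    rw [card_equiv e (t := {y | y.1 = b}) (by simp), ← Fintype.card_subtype,
      Fintype.card_congr (Equiv.sigmaSubtype b), Fintype.card_fin]
  have hmaps : ∀ σ ∈ (univ : Finset (Equiv.Perm α)),
      u₀ ∘ σ ∈ ({u : α → β | ∀ b, #{x | u x = b} = c b} : Finset _) := fun σ _ => by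
    simpa [← hu₀] using fun b => card_equiv σ (by simp)
  have hfiber : ∀ u ∈ ({u : α → β | ∀ b, #{x | u x = b} = c b} : Finset _),
      #{σ : Equiv.Perm α | u₀ ∘ σ = u} = ∏ b, (c b)! := by
    intro u hu
    rw [card_perm_comp_eq fun b => by rw [(mem_filter.1 hu).2, hu₀]]
    exact prod_congr rfl fun b _ => by rw [hu₀]
  rw [← Fintype.card_perm, ← Finset.card_univ, card_eq_sum_card_fiberwise hmaps,
    sum_congr rfl hfiber, sum_const, smul_eq_mul]

theorem factorial_card_nsmul_eq_of_comp_perm_invariant {M : Type*} [AddCommMonoid M]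
    {p : (α → β) → M} (hp : ∀ (σ : Equiv.Perm α) ψ, p (ψ ∘ σ) = p ψ) (ψ : α → β) :
    (Fintype.card α)! • p ψ = (∏ b, (#{x | ψ x = b})!) •
      ∑ ψ' ∈ {ψ' : α → β | ∀ b, #{x | ψ' x = b} = #{x | ψ x = b}}, p ψ' := by
  have hmaps : ∀ σ ∈ (univ : Finset (Equiv.Perm α)),
      ψ ∘ σ ∈ ({ψ' : α → β | ∀ b, #{x | ψ' x = b} = #{x | ψ x = b}} : Finset _) :=
    fun σ _ => by simpa using fun b => card_equiv σ (by simp)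
  calc (Fintype.card α)! • p ψ = ∑ σ : Equiv.Perm α, p (ψ ∘ σ) := by
        simp only [hp, sum_const, Finset.card_univ, Fintype.card_perm]
    _ = ∑ ψ' ∈ {ψ' : α → β | ∀ b, #{x | ψ' x = b} = #{x | ψ x = b}},
          #{σ : Equiv.Perm α | ψ ∘ σ = ψ'} • p ψ' := by
        rw [← sum_fiberwise_of_maps_to hmaps]
        refine sum_congr rfl fun ψ' _ => ?_
        rw [← sum_const]
        exact sum_congr rfl fun σ hσ => by rw [(mem_filter.1 hσ).2]
    _ = _ := by
        rw [smul_sum]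
        refine sum_congr rfl fun ψ' hψ' => ?_
        rw [card_perm_comp_eq (mem_filter.1 hψ').2]

end PermCount

section SortedPairs

variable {α : Type*} [LinearOrder α]

def sortPair (p : α × α) : α × α := (min p.1 p.2, max p.1 p.2)

/-- The number of edges `{q.1, q.2}` in the multigraph with adjacency matrix `B`, recorded at
sorted pairs only (a loop contributes `2` to the diagonal entry). -/
def edgeMult (B : α → α → ℕ) (q : α × α) : ℕ :=
  if q.1 < q.2 then B q.1 q.2 else if q.1 = q.2 then B q.1 q.1 / 2 else 0

theorem sortPair_eq_iff {p : α × α} {a b : α} (hab : a ≤ b) :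
    sortPair p = (a, b) ↔ p = (a, b) ∨ p = (b, a) := by
  obtain ⟨x, y⟩ := p
  simp only [sortPair, Prod.mk.injEq]
  constructor
  · rintro ⟨h₁, h₂⟩
    rcases le_total x y with h | h <;> simp_all
  · rintro (⟨rfl, rfl⟩ | ⟨rfl, rfl⟩) <;> simp [hab]

theorem sortPair_fst_le (p : α × α) : (sortPair p).1 ≤ (sortPair p).2 :=
  min_le_max

theorem card_sortPair_eq [Fintype α] {a b : α} (hab : a ≤ b) :
    #{p : α × α | sortPair p = (a, b)} = if a < b then 2 else 1 := by
  have : ({p : α × α | sortPair p = (a, b)} : Finset _) = {(a, b), (b, a)} := by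
    ext p; simp [sortPair_eq_iff hab]
  rw [this]
  rcases hab.lt_or_eq with h | rfl
  · rw [if_pos h, card_pair (by simp [h.ne])]
  · simp

theorem edgeMult_add_edgeMult_swap {B : α → α → ℕ} (hsym : ∀ i j, B i j = B j i)
    (heven : ∀ i, 2 ∣ B i i) (i j : α) : edgeMult B (i, j) + edgeMult B (j, i) = B i j := by
  rcases lt_trichotomy i j with h | rfl | h
  · simp [edgeMult, h, h.not_gt, h.ne']
  · simp only [edgeMult, lt_irrefl, if_false, if_true]
    have := heven i
    omega
  · simp [edgeMult, h, h.not_gt, h.ne', hsym i j]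

theorem edgeMult_eq_edgeMult_iff {B C : α → α → ℕ} (hBsym : ∀ i j, B i j = B j i)
    (hBeven : ∀ i, 2 ∣ B i i) (hCsym : ∀ i j, C i j = C j i) (hCeven : ∀ i, 2 ∣ C i i) :
    edgeMult C = edgeMult B ↔ C = B := by
  refine ⟨fun h => funext₂ fun i j => ?_, fun h => h ▸ rfl⟩
  rw [← edgeMult_add_edgeMult_swap hCsym hCeven, ← edgeMult_add_edgeMult_swap hBsym hBeven, h]

theorem two_mul_sum_edgeMult [Fintype α] {B : α → α → ℕ} (hsym : ∀ i j, B i j = B j i)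
    (heven : ∀ i, 2 ∣ B i i) : 2 * ∑ q, edgeMult B q = ∑ i, ∑ j, B i j := by
  simp_rw [← edgeMult_add_edgeMult_swap hsym heven, sum_add_distrib]
  rw [sum_comm (f := fun i j => edgeMult B (j, i)), ← Fintype.sum_prod_type, two_mul]

theorem prod_factorial_edgeMult [Fintype α] (B : α → α → ℕ) :
    ∏ q, (edgeMult B q)! = (∏ i, ∏ j, if i < j then (B i j)! else 1) * ∏ i, (B i i / 2)! := by
  have h : ∀ i j, (edgeMult B (i, j))! =
      (if i < j then (B i j)! else 1) * if i = j then (B i i / 2)! else 1 := by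
    intro i j
    rcases lt_trichotomy i j with h | rfl | h
    · simp [edgeMult, h, h.ne]
    · simp [edgeMult]
    · simp [edgeMult, h.not_gt, h.ne']
  simp_rw [Fintype.prod_prod_type, h, prod_mul_distrib, prod_ite_eq, if_pos (mem_univ _)]

variable {ι : Type*} [Fintype ι] [DecidableEq ι]

theorem card_sortPair_comp_eq (f : ι → α × α) (q : α × α) :
    #{e | sortPair (f e) = q} =
      edgeMult (fun i j => #{e | f e = (i, j)} + #{e | f e = (j, i)}) q := by
  obtain ⟨a, b⟩ := q
  rcases lt_trichotomy a b with h | rfl | h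
  · rw [edgeMult, if_pos h, ← card_union_of_disjoint, ← filter_or]
    · simp only [sortPair_eq_iff h.le]
    · exact disjoint_filter.2 fun e _ h₁ h₂ => h.ne (congrArg Prod.fst (h₁.symm.trans h₂))
  · simp only [edgeMult, sortPair_eq_iff le_rfl, or_self, lt_irrefl, if_false, if_true]
    omega
  · simp only [edgeMult, h.not_gt, h.ne', if_false, Finset.card_eq_zero, filter_eq_empty_iff]
    intro e _ he
    exact h.not_ge (by simpa [he] using sortPair_fst_le (f e))

theorem card_sortPair_comp_eq_pow [Fintype α] {u : ι → α × α}
    (hu : ∀ e, (u e).1 ≤ (u e).2) :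
    #{f : ι → α × α | ∀ e, sortPair (f e) = u e} = 2 ^ #{e | (u e).1 < (u e).2} := by
  have : ({f : ι → α × α | ∀ e, sortPair (f e) = u e} : Finset _) =
      Fintype.piFinset fun e => {p | sortPair p = u e} := by
    ext f; simp
  rw [this, Fintype.card_piFinset, card_filter, ← prod_pow_eq_pow_sum]
  refine prod_congr rfl fun e _ => ?_
  rw [← Prod.mk.eta (p := u e), card_sortPair_eq (hu e)]
  split_ifs <;> rfl

end SortedPairs

def pairStubs (m : ℕ) : Fin m × Fin 2 ≃ Fin (2 * m) :=
  finProdFinEquiv.trans (finCongr (Nat.mul_comm m 2))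

def edgeList {α : Type*} (m : ℕ) : (Fin (2 * m) → α) ≃ (Fin m → α × α) :=
  ((pairStubs m).arrowCongr (Equiv.refl α)).symm.trans
    ((Equiv.curry _ _ _).trans (Equiv.piCongrRight fun _ => piFinTwoEquiv fun _ => α))

theorem pairStubs_apply {m : ℕ} (e : Fin m) (b : Fin 2) :
    pairStubs m (e, b) = ⟨2 * e + b, by omega⟩ := by
  ext; simp [pairStubs, add_comm]

theorem edgeList_apply {α : Type*} {m : ℕ} (ψ : Fin (2 * m) → α) (e : Fin m) :
    edgeList m ψ e = (ψ (pairStubs m (e, 0)), ψ (pairStubs m (e, 1))) := rfl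

section StubAdj

variable {m n : ℕ}

theorem stubAdj_eq_card (ψ : Fin (2 * m) → Fin n) (i j : Fin n) :
    stubAdj ψ i j = #{e | edgeList m ψ e = (i, j)} + #{e | edgeList m ψ e = (j, i)} := by
  rw [card_filter, card_filter, ← sum_add_distrib]
  simp only [stubAdj, edgeList_apply, pairStubs_apply, Prod.mk.injEq, Fin.val_zero, Fin.val_one,
    add_zero]

theorem degB_stubAdj (ψ : Fin (2 * m) → Fin n) (i : Fin n) :
    degB (stubAdj ψ) i = colorCount ψ i := by
  rw [colorCount, card_filter, ← (pairStubs m).sum_comp, Fintype.sum_prod_type]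
  simp only [degB, stubAdj_eq_card, card_filter, ← sum_add_distrib]
  rw [sum_comm]
  refine sum_congr rfl fun e _ => ?_
  rw [Fin.sum_univ_two, edgeList_apply, sum_add_distrib]
  simp [Prod.ext_iff, ite_and]

theorem stubAdj_eq_iff {B : Fin n → Fin n → ℕ} (hsym : ∀ i j, B i j = B j i)
    (heven : ∀ i, 2 ∣ B i i) (ψ : Fin (2 * m) → Fin n) :
    (∀ i j, stubAdj ψ i j = B i j) ↔
      ∀ q, #{e | sortPair (edgeList m ψ e) = q} = edgeMult B q := by
  have hS : (fun i j => #{e | edgeList m ψ e = (i, j)} + #{e | edgeList m ψ e = (j, i)}) =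
      stubAdj ψ := funext₂ fun i j => (stubAdj_eq_card ψ i j).symm
  have hSsym : ∀ i j, stubAdj ψ i j = stubAdj ψ j i := fun i j => by
    rw [stubAdj_eq_card, stubAdj_eq_card, add_comm]
  have hSeven : ∀ i, 2 ∣ stubAdj ψ i i := fun i => by
    rw [stubAdj_eq_card]; exact ⟨_, (two_mul _).symm⟩
  simp only [card_sortPair_comp_eq, hS, ← funext_iff]
  exact (edgeMult_eq_edgeMult_iff hsym heven hSsym hSeven).symm

theorem sum_edgeMult_filter_lt (B : Fin n → Fin n → ℕ) :
    ∑ q with q.1 < q.2, edgeMult B q = nonloop B := by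
  rw [sum_filter, Fintype.sum_prod_type, nonloop]
  refine sum_congr rfl fun i _ => sum_congr rfl fun j _ => ?_
  split_ifs with h <;> simp [edgeMult, h]

theorem card_stubAdj_mul_prod_factorial_edgeMult {B : Fin n → Fin n → ℕ} (hsym : ∀ i j, B i j = B j i)
    (heven : ∀ i, 2 ∣ B i i) (hm : ∑ i, ∑ j, B i j = 2 * m) :
    #{ψ : Fin (2 * m) → Fin n | ∀ i j, stubAdj ψ i j = B i j} * ∏ q, (edgeMult B q)! =
      m ! * 2 ^ nonloop B := by
  set U : Finset (Fin m → Fin n × Fin n) := {u | ∀ q, #{e | u e = q} = edgeMult B q}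
  have hedges : #{ψ : Fin (2 * m) → Fin n | ∀ i j, stubAdj ψ i j = B i j} =
      #{f : Fin m → Fin n × Fin n | sortPair ∘ f ∈ U} :=
    card_equiv (edgeList m) fun ψ => by simp [U, stubAdj_eq_iff hsym heven]
  have hmaps : ∀ f ∈ ({f | sortPair ∘ f ∈ U} : Finset (Fin m → Fin n × Fin n)),
      sortPair ∘ f ∈ U := fun f hf => (mem_filter.1 hf).2
  have hlifts : ∀ u ∈ U, #{f ∈ {f | sortPair ∘ f ∈ U} | sortPair ∘ f = u} = 2 ^ nonloop B := by
    intro u hu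
    have hfib := (mem_filter.1 hu).2
    have hsorted : ∀ e, (u e).1 ≤ (u e).2 := fun e => by
      by_contra h
      have : edgeMult B (u e) = 0 := by simp [edgeMult, (not_le.1 h).not_gt, (not_le.1 h).ne']
      rw [← hfib, Finset.card_eq_zero, filter_eq_empty_iff] at this
      exact this (mem_univ e) rfl
    have hnonloop : #{e | (u e).1 < (u e).2} = nonloop B := by
      rw [← sum_edgeMult_filter_lt, ← sum_congr rfl fun q _ => hfib q,
        sum_card_fiberwise_eq_card_filter]
      simp
    rw [← hnonloop, ← card_sortPair_comp_eq_pow hsorted, filter_filter]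
    congr 1
    ext f
    simp only [mem_filter, mem_univ, true_and]
    refine ⟨fun h => congrFun h.2, fun h => ?_⟩
    have hf : sortPair ∘ f = u := funext h
    exact ⟨hf ▸ hu, hf⟩
  have hsum : ∑ q, edgeMult B q = Fintype.card (Fin m) := by
    have := two_mul_sum_edgeMult hsym heven
    rw [Fintype.card_fin]; omega
  rw [hedges, card_eq_sum_card_fiberwise hmaps, sum_congr rfl hlifts, sum_const, smul_eq_mul,
    mul_right_comm, card_fiber_eq_mul_prod_factorial hsum, Fintype.card_fin]

end StubAdj

theorem edge_stationary_formula_general (n m : ℕ)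
    (p : (Fin (2 * m) → Fin n) → ℝ)
    (hexch : ∀ (τ : Equiv.Perm (Fin (2 * m))) (ψ : Fin (2 * m) → Fin n),
      p (ψ ∘ τ) = p ψ)
    (B : Fin n → Fin n → ℕ)
    (hsym : ∀ i j, B i j = B j i) (heven : ∀ i, 2 ∣ B i i)
    (hm : ∑ i, ∑ j, B i j = 2 * m) :
    (∑ ψ ∈ Finset.univ.filter
        (fun ψ : Fin (2 * m) → Fin n => ∀ i j, stubAdj ψ i j = B i j), p ψ) =
      (∑ ψ ∈ Finset.univ.filter
          (fun ψ : Fin (2 * m) → Fin n => ∀ i, colorCount ψ i = degB B i), p ψ)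
        * (∏ i : Fin n, ((degB B i)! : ℝ)) / ((2 * m)! : ℝ)
        * (m ! : ℝ) * 2 ^ nonloop B /
        ((∏ i : Fin n, ∏ j : Fin n, if i < j then ((B i j)! : ℝ) else 1) *
          ∏ i : Fin n, ((B i i / 2)! : ℝ)) := by
  set S := Finset.univ.filter fun ψ : Fin (2 * m) → Fin n => ∀ i j, stubAdj ψ i j = B i j
  set P := ∑ ψ ∈ Finset.univ.filter
    (fun ψ : Fin (2 * m) → Fin n => ∀ i, colorCount ψ i = degB B i), p ψ
  set D : ℝ := ∏ i : Fin n, ((degB B i)! : ℝ)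
  set K : ℝ := (∏ i : Fin n, ∏ j : Fin n, if i < j then ((B i j)! : ℝ) else 1) *
    ∏ i : Fin n, ((B i i / 2)! : ℝ) with hK
  have hcount : (#S : ℝ) * K = m ! * 2 ^ nonloop B := by
    have := card_stubAdj_mul_prod_factorial_edgeMult hsym heven hm
    rw [prod_factorial_edgeMult] at this
    rw [hK]
    exact_mod_cast this
  have hweight : ∀ ψ ∈ S, ((2 * m)! : ℝ) * p ψ = D * P := by
    intro ψ hψ
    have htype : ∀ i, #{l | ψ l = i} = degB B i := fun i => by
      rw [← colorCount, ← degB_stubAdj, funext₂ (mem_filter.1 hψ).2]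
    have := factorial_card_nsmul_eq_of_comp_perm_invariant hexch ψ
    simp only [htype, Fintype.card_fin, nsmul_eq_mul, Nat.cast_prod] at this
    exact this
  have hsumS : ((2 * m)! : ℝ) * ∑ ψ ∈ S, p ψ = #S * (D * P) := by
    rw [mul_sum, sum_congr rfl hweight, sum_const, nsmul_eq_mul]
  have hK0 : K ≠ 0 := by rw [hK]; positivity
  field_simp
  linear_combination K * hsumS + D * P * hcount

/-- If a random adjacency matrix `X` on `n` vertices with `m` edges is
obtained via the stub-pairing map from a ball exchangeable random urn configuration
`Ψ ∈ [n]^{[2m]}` (with probability mass function `p`), then for every `B ∈ A_n^m`: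
`P(X = B) = P(deg X = deg B) · (∏_i d(B,i)!)/(2m)! · m!·2^{m'(B)} /
((∏_{i<j} B(i,j)!)·(∏_i (B(i,i)/2)!))`. -/
theorem edge_stationary_formula (n m : ℕ)
    (p : (Fin (2 * m) → Fin n) → ℝ)
    (hp : ∀ ψ, 0 ≤ p ψ) (hsum : ∑ ψ, p ψ = 1)
    (hexch : ∀ (τ : Equiv.Perm (Fin (2 * m))) (ψ : Fin (2 * m) → Fin n),
      p (ψ ∘ τ) = p ψ)
    (B : Fin n → Fin n → ℕ)
    (hsym : ∀ i j, B i j = B j i) (heven : ∀ i, 2 ∣ B i i)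
    (hm : ∑ i, ∑ j, B i j = 2 * m) :
    (∑ ψ ∈ Finset.univ.filter
        (fun ψ : Fin (2 * m) → Fin n => ∀ i j, stubAdj ψ i j = B i j), p ψ) =
      (∑ ψ ∈ Finset.univ.filter
          (fun ψ : Fin (2 * m) → Fin n => ∀ i, colorCount ψ i = degB B i), p ψ)
        * (∏ i : Fin n, ((degB B i)! : ℝ)) / ((2 * m)! : ℝ)
        * (m ! : ℝ) * 2 ^ nonloop B /
        ((∏ i : Fin n, ∏ j : Fin n, if i < j then ((B i j)! : ℝ) else 1) *
          ∏ i : Fin n, ((B i i / 2)! : ℝ)) :=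
  edge_stationary_formula_general n m p hexch B hsym heven hm
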